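/- arXiv:1707.08694 — 3 statements merged into one kernel-verified Lean document; each statement's English description precedes it below -/
import Mathlib

section
/- Let V be a right-closed monoidal category (i.e. for every object V the functor (-) ⊗ V has a right adjoint). For an object V of V, tensors by V in V-enriched categories are absolute (i.e. preserved by every V-functor out of any V-category admitting them) if and only if V admits a left dual in V. -/
/-!
STATEMENT 1: Let V be a right-closed monoidal category (i.e. for every object V the
functor (-) ⊗ V has a right adjoint).  For an object v of V, tensors by v in
V-enriched categories are absolute (preserved by every V-functor) if and only if
v admits a left dual in V.

Conventions: we follow Mathlib's enriched-category conventions, in which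
`eComp V X Y Z : (X ⟶[V] Y) ⊗ (Y ⟶[V] Z) ⟶ (X ⟶[V] Z)`.  Under this convention the
tensor product of Mathlib is the *reverse* of the tensor product used in the paper
(`A ⊗_paper B = B ⊗ A`), so the paper's right-closure "(−) ⊗ V has a right adjoint"
becomes "`tensorLeft v` has a right adjoint", and a *left dual* of `v` in the paper's
sense is an object `w` with an exact pairing `ExactPairing w v`
(this is Mathlib's notion of left dual as well).
-/

universe w v u u₁ u₂

open CategoryTheory MonoidalCategory Limits

namespace Paper

variable (V : Type u) [Category.{v} V] [MonoidalCategory V]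

/-- `u` exhibits `Y` as the tensor of `X` by `v ∈ V`: for every `w ∈ V` and `Z ∈ C`,
pasting with `u` gives a bijection between maps `w ⟶ C(Y,Z)` and maps
`v ⊗ w ⟶ C(X,Z)` (which, in the paper's tensor-order, is `w ⊗ v ⟶ C(X,Z)`). -/
def IsTensor {C : Type u₁} [EnrichedCategory V C] (v : V) (X Y : C)
    (u : v ⟶ (X ⟶[V] Y)) : Prop :=
  ∀ (w : V) (Z : C), Function.Bijective
    (fun f : w ⟶ ((Y ⟶[V] Z) : V) => (u ⊗ₘ f) ≫ eComp V X Y Z)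

/-- A `V`-functor `F` preserves a tensor `(Y, u)` of `X` by `v` when the composite of
`u` with the action of `F` on homs exhibits `F.obj Y` as the tensor of `F.obj X` by `v`. -/
def PreservesTensor {C : Type u₁} {D : Type u₂} [EnrichedCategory V C]
    [EnrichedCategory V D] (F : EnrichedFunctor V C D) (v : V) (X Y : C)
    (u : v ⟶ (X ⟶[V] Y)) : Prop :=
  IsTensor V v (F.obj X) (F.obj Y) (u ≫ F.map X Y)

/-- Tensors by `v` are absolute: every tensor by `v` existing in any `V`-category is
preserved by every `V`-functor out of it. -/
def TensorsAbsolute (v : V) : Prop :=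
  ∀ (C : Type u₁) (D : Type u₂) (_ : EnrichedCategory V C) (_ : EnrichedCategory V D)
    (F : EnrichedFunctor V C D) (X Y : C) (u : v ⟶ (X ⟶[V] Y)),
    IsTensor V v X Y u → PreservesTensor V F v X Y u

/-- `V` is right closed: tensoring (in the paper's order `(−) ⊗ v`, i.e. Mathlib's
`tensorLeft v`) admits a right adjoint for every `v`. -/
def RightClosed : Prop := ∀ v : V, (tensorLeft v).IsLeftAdjoint

/-- `v` admits a left dual in `V` (a left adjoint of `v` in the delooping bicategory of
`V`): an object `w` together with an exact pairing exhibiting `w` as a left dual of `v`. -/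
def HasLeftDualObj (v : V) : Prop := ∃ w : V, Nonempty (ExactPairing w v)

/-!
If `w` is a left dual of `v`, a morphism `u : v ⟶ C(X, Y)` exhibits `Y` as the tensor `v · X`
exactly when it has a mate `u' : w ⟶ C(Y, X)` satisfying two triangle equations with `η` and
`ε`. These are equations between morphisms of `V`, so every `V`-functor preserves them.

Conversely, in `V` enriched over itself, `u : v ⟶ [X, Y]` exhibits a tensor iff its transpose
`X ⊗ v ⟶ Y` is invertible. Applying the `V`-functor `[v, -]` to the tensor `𝟙 ⊗ v ≅ v` shows
that the canonical map `[v, 𝟙] ⊗ v ⟶ [v, v]` is invertible. Pulling `id_v` back along it gives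
a coevaluation for the evaluation `v ⊗ [v, 𝟙] ⟶ 𝟙`, and `[v, 𝟙]` is a left dual of `v`.
-/

section

variable {V}

section Monoidal

theorem coevaluation_evaluation_whiskerRight {w v : V} (η : 𝟙_ V ⟶ w ⊗ v)
    (ε : v ⊗ w ⟶ 𝟙_ V)
    (h : v ◁ η ≫ (α_ v w v).inv ≫ ε ▷ v = (ρ_ v).hom ≫ (λ_ v).inv) (Z : V) :
    v ◁ (λ_ Z).inv ≫ v ◁ η ▷ Z ≫ v ◁ (α_ w v Z).hom ≫ (α_ v w (v ⊗ Z)).inv ≫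
      ε ▷ (v ⊗ Z) ≫ (λ_ (v ⊗ Z)).hom = 𝟙 (v ⊗ Z) := by
  calc _ = v ◁ (λ_ Z).inv ≫ (α_ v (𝟙_ V) Z).inv ≫
        (v ◁ η ≫ (α_ v w v).inv ≫ ε ▷ v) ▷ Z ≫ (λ_ v).hom ▷ Z := by monoidal
    _ = 𝟙 (v ⊗ Z) := by rw [h]; monoidal

theorem evaluation_coevaluation_of_coevaluation_evaluation {w v : V} (η : 𝟙_ V ⟶ w ⊗ v)
    (ε : v ⊗ w ⟶ 𝟙_ V) (hε : ∀ f g : w ⟶ w, v ◁ f ≫ ε = v ◁ g ≫ ε → f = g)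
    (h : v ◁ η ≫ (α_ v w v).inv ≫ ε ▷ v = (ρ_ v).hom ≫ (λ_ v).inv) :
    η ▷ w ≫ (α_ w v w).hom ≫ w ◁ ε = (λ_ w).hom ≫ (ρ_ w).inv := by
  rw [← cancel_epi (λ_ w).inv, ← cancel_mono (ρ_ w).hom]
  simp only [Category.assoc, Iso.inv_hom_id, Iso.inv_hom_id_assoc]
  refine hε _ _ ?_
  have hεε : v ◁ w ◁ ε ≫ v ◁ (ρ_ w).hom ≫ ε
      = (α_ v w (v ⊗ w)).inv ≫ ε ▷ (v ⊗ w) ≫ (λ_ (v ⊗ w)).hom ≫ ε := by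
    calc _ = (α_ v w (v ⊗ w)).inv ≫ (v ⊗ w) ◁ ε ≫ (ρ_ (v ⊗ w)).hom ≫ ε := by monoidal
      _ = _ := by
        rw [← rightUnitor_naturality, whisker_exchange_assoc, ← unitors_equal,
          leftUnitor_naturality]
  calc v ◁ ((λ_ w).inv ≫ η ▷ w ≫ (α_ w v w).hom ≫ w ◁ ε ≫ (ρ_ w).hom) ≫ ε
      = (v ◁ (λ_ w).inv ≫ v ◁ η ▷ w ≫ v ◁ (α_ w v w).hom ≫ (α_ v w (v ⊗ w)).inv ≫
          ε ▷ (v ⊗ w) ≫ (λ_ (v ⊗ w)).hom) ≫ ε := by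
        simp only [MonoidalCategory.whiskerLeft_comp, Category.assoc, hεε]
    _ = v ◁ 𝟙 w ≫ ε := by
        rw [coevaluation_evaluation_whiskerRight _ _ h, Category.id_comp,
          MonoidalCategory.whiskerLeft_id, Category.id_comp]

end Monoidal

section Enriched

variable {C : Type u₁} [EnrichedCategory V C]

theorem tensorHom_eComp_assoc {A B G : V} {O P Q R : C} (a : A ⟶ (O ⟶[V] P))
    (b : B ⟶ (P ⟶[V] Q)) (g : G ⟶ (Q ⟶[V] R)) :
    (a ⊗ₘ ((b ⊗ₘ g) ≫ eComp V P Q R)) ≫ eComp V O P R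
      = (α_ A B G).inv ≫ (((a ⊗ₘ b) ≫ eComp V O P Q) ⊗ₘ g) ≫ eComp V O Q R := by
  calc (a ⊗ₘ ((b ⊗ₘ g) ≫ eComp V P Q R)) ≫ eComp V O P R
      = (a ⊗ₘ b ⊗ₘ g) ≫ _ ◁ eComp V P Q R ≫ eComp V O P R := by
        rw [tensorHom_comp_whiskerLeft_assoc]
    _ = (α_ A B G).inv ≫ ((a ⊗ₘ b) ⊗ₘ g) ≫ eComp V O P Q ▷ _ ≫ eComp V O Q R := by
        rw [← e_assoc, associator_inv_naturality_assoc]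
    _ = _ := by rw [tensorHom_comp_whiskerRight_assoc]

theorem tensorHom_eId_eComp {A : V} {X Y : C} (u : A ⟶ (X ⟶[V] Y)) :
    (u ⊗ₘ eId V Y) ≫ eComp V X Y Y = (ρ_ A).hom ≫ u := by
  have := e_comp_id V X Y
  simp [MonoidalCategory.tensorHom_def]

theorem eId_tensorHom_eComp {A : V} {X Z : C} (g : A ⟶ (X ⟶[V] Z)) :
    (eId V X ⊗ₘ g) ≫ eComp V X X Z = (λ_ A).hom ≫ g := by
  simp [MonoidalCategory.tensorHom_def']

theorem isTensor_of_triangles (w v : V) [ExactPairing w v] {X Y : C}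
    (u : v ⟶ (X ⟶[V] Y)) (u' : w ⟶ (Y ⟶[V] X))
    (h₁ : (u ⊗ₘ u') ≫ eComp V X Y X = ε_ w v ≫ eId V X)
    (h₂ : η_ w v ≫ (u' ⊗ₘ u) ≫ eComp V Y X Y = eId V Y) :
    IsTensor V v X Y u := by
  intro A Z
  refine Function.bijective_iff_has_inverse.2
    ⟨fun g => (λ_ A).inv ≫ η_ w v ▷ A ≫ (α_ w v A).hom ≫ (u' ⊗ₘ g) ≫ eComp V Y X Z,
      fun f => ?_, fun g => ?_⟩
  · calc (λ_ A).inv ≫ η_ w v ▷ A ≫ (α_ w v A).hom ≫ (u' ⊗ₘ (u ⊗ₘ f) ≫ eComp V X Y Z) ≫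
          eComp V Y X Z
        = (λ_ A).inv ≫ ((η_ w v ≫ (u' ⊗ₘ u) ≫ eComp V Y X Y) ⊗ₘ f) ≫ eComp V Y Y Z := by
          rw [tensorHom_eComp_assoc, Iso.hom_inv_id_assoc, whiskerRight_comp_tensorHom_assoc]
      _ = f := by rw [h₂, eId_tensorHom_eComp, Iso.inv_hom_id_assoc]
  · calc (u ⊗ₘ (λ_ A).inv ≫ η_ w v ▷ A ≫ (α_ w v A).hom ≫ (u' ⊗ₘ g) ≫ eComp V Y X Z) ≫
          eComp V X Y Z
        = v ◁ (λ_ A).inv ≫ v ◁ η_ w v ▷ A ≫ v ◁ (α_ w v A).hom ≫ (α_ v w (v ⊗ A)).inv ≫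
            (((u ⊗ₘ u') ≫ eComp V X Y X) ⊗ₘ g) ≫ eComp V X X Z := by
          rw [← whiskerLeft_comp_tensorHom_assoc, ← whiskerLeft_comp_tensorHom_assoc,
            ← whiskerLeft_comp_tensorHom_assoc, tensorHom_eComp_assoc]
      _ = (v ◁ (λ_ A).inv ≫ v ◁ η_ w v ▷ A ≫ v ◁ (α_ w v A).hom ≫ (α_ v w (v ⊗ A)).inv ≫
            ε_ w v ▷ (v ⊗ A) ≫ (λ_ (v ⊗ A)).hom) ≫ g := by
          rw [h₁, ← whiskerRight_comp_tensorHom, Category.assoc, eId_tensorHom_eComp]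
          simp only [Category.assoc]
      _ = g := by
          rw [coevaluation_evaluation_whiskerRight _ _ (ExactPairing.coevaluation_evaluation w v),
            Category.id_comp]

theorem exists_triangles_of_isTensor (w v : V) [ExactPairing w v] {X Y : C}
    (u : v ⟶ (X ⟶[V] Y)) (h : IsTensor V v X Y u) :
    ∃ u' : w ⟶ (Y ⟶[V] X), (u ⊗ₘ u') ≫ eComp V X Y X = ε_ w v ≫ eId V X ∧
      η_ w v ≫ (u' ⊗ₘ u) ≫ eComp V Y X Y = eId V Y := by
  obtain ⟨u', h₁ : (u ⊗ₘ u') ≫ eComp V X Y X = ε_ w v ≫ eId V X⟩ := (h w X).2 _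
  refine ⟨u', h₁, (h (𝟙_ V) Y).1 ?_⟩
  calc (u ⊗ₘ η_ w v ≫ (u' ⊗ₘ u) ≫ eComp V Y X Y) ≫ eComp V X Y Y
      = (v ◁ η_ w v ≫ (α_ v w v).inv ≫ ε_ w v ▷ v) ≫ (λ_ v).hom ≫ u := by
        rw [← whiskerLeft_comp_tensorHom_assoc, tensorHom_eComp_assoc, h₁,
          ← whiskerRight_comp_tensorHom, Category.assoc, eId_tensorHom_eComp]
        simp only [Category.assoc]
    _ = (u ⊗ₘ eId V Y) ≫ eComp V X Y Y := by
        rw [ExactPairing.coevaluation_evaluation, tensorHom_eId_eComp]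
        simp

theorem preservesTensor_of_exactPairing (w v : V) [ExactPairing w v] {D : Type u₂}
    [EnrichedCategory V D] (F : EnrichedFunctor V C D) {X Y : C} (u : v ⟶ (X ⟶[V] Y))
    (h : IsTensor V v X Y u) : PreservesTensor V F v X Y u := by
  obtain ⟨u', h₁, h₂⟩ := exists_triangles_of_isTensor w v u h
  refine isTensor_of_triangles w v _ (u' ≫ F.map Y X) ?_ ?_
  · rw [← tensorHom_comp_tensorHom_assoc, ← F.map_comp, reassoc_of% h₁, F.map_id]
  · rw [← tensorHom_comp_tensorHom_assoc, ← F.map_comp, reassoc_of% h₂, F.map_id]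

end Enriched

theorem tensorsAbsolute_of_hasLeftDualObj {v : V} (h : HasLeftDualObj V v) :
    TensorsAbsolute V v := by
  obtain ⟨w, ⟨_⟩⟩ := h
  intro C D _ _ F X Y u hu
  exact preservesTensor_of_exactPairing w v F u hu

section Closed

open MonoidalClosed (curry uncurry uncurry_curry uncurry_eq uncurry_natural_left
  uncurry_injective)

theorem uncurry_tensorHom_comp {x y z A B : V} [Closed x] [Closed y]
    (f : A ⟶ (ihom x).obj y) (g : B ⟶ (ihom y).obj z) :
    uncurry ((f ⊗ₘ g) ≫ MonoidalClosed.comp x y z)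
      = (α_ x A B).inv ≫ uncurry f ▷ B ≫ uncurry g := by
  rw [uncurry_natural_left, MonoidalClosed.comp_eq, uncurry_curry,
    MonoidalClosed.compTranspose_eq, ← id_tensorHom, associator_inv_naturality_assoc,
    tensorHom_comp_whiskerRight_assoc, id_tensorHom, ← uncurry_eq,
    MonoidalCategory.tensorHom_def_assoc, uncurry_eq g]
  rfl

def dualTensorToEnd (v : V) [Closed v] : (ihom v).obj (𝟙_ V) ⊗ v ⟶ (ihom v).obj v :=
  curry ((α_ _ _ _).inv ≫ (ihom.ev v).app (𝟙_ V) ▷ v ≫ (λ_ v).hom)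

theorem coevaluation_evaluation_of_isIso_dualTensorToEnd (v : V) [Closed v]
    [IsIso (dualTensorToEnd v)] :
    v ◁ (curry (ρ_ v).hom ≫ inv (dualTensorToEnd v)) ≫ (α_ _ _ _).inv ≫
      (ihom.ev v).app (𝟙_ V) ▷ v = (ρ_ v).hom ≫ (λ_ v).inv := by
  rw [← cancel_mono (λ_ v).hom]
  have hk : (α_ _ _ _).inv ≫ (ihom.ev v).app (𝟙_ V) ▷ v ≫ (λ_ v).hom
      = v ◁ dualTensorToEnd v ≫ (ihom.ev v).app v := by
    rw [← uncurry_eq, dualTensorToEnd, uncurry_curry]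
  simp only [Category.assoc, Iso.inv_hom_id, Category.comp_id, hk]
  rw [← MonoidalCategory.whiskerLeft_comp_assoc, Category.assoc, IsIso.inv_hom_id,
    Category.comp_id, ← uncurry_eq, uncurry_curry]

theorem hasLeftDualObj_of_isIso_dualTensorToEnd (v : V) [Closed v]
    [IsIso (dualTensorToEnd v)] : HasLeftDualObj V v :=
  ⟨_, ⟨{ coevaluation' := curry (ρ_ v).hom ≫ inv (dualTensorToEnd v)
         evaluation' := (ihom.ev v).app (𝟙_ V)
         coevaluation_evaluation' := coevaluation_evaluation_of_isIso_dualTensorToEnd v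
         evaluation_coevaluation' := evaluation_coevaluation_of_coevaluation_evaluation _ _
           (fun _ _ h => uncurry_injective (by rwa [uncurry_eq, uncurry_eq]))
           (coevaluation_evaluation_of_isIso_dualTensorToEnd v) }⟩⟩

end Closed

section SelfEnriched

variable [MonoidalClosed V]

open scoped MonoidalClosed
open MonoidalClosed (curry uncurry uncurry_curry uncurry_natural_left uncurry_injective)

def ihomEnrichedFunctor (v : V) : EnrichedFunctor V V V where
  obj X := (ihom v).obj X
  map X Y := curry (MonoidalClosed.comp v X Y)
  map_id X := uncurry_injective <| by
    rw [uncurry_natural_left, uncurry_curry, MonoidalClosed.enrichedCategorySelf_id,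
      MonoidalClosed.enrichedCategorySelf_id, MonoidalClosed.id_eq ((ihom v).obj X),
      uncurry_curry, ← Category.comp_id (ρ_ _).hom, ← Iso.inv_comp_eq]
    exact MonoidalClosed.comp_id v X
  map_comp X Y Z := uncurry_injective <| by
    simp only [MonoidalClosed.enrichedCategorySelf_comp]
    rw [uncurry_natural_left, uncurry_curry, uncurry_tensorHom_comp, uncurry_curry,
      uncurry_curry]
    exact (MonoidalClosed.assoc v X Y Z).symm

theorem isTensor_self_iff {v X Y : V} (u : v ⟶ (ihom X).obj Y) :
    IsTensor V v X Y u ↔ IsIso (uncurry u) := by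
  have transpose : ∀ A Z : V,
      (fun f : A ⟶ (ihom Y).obj Z => (u ⊗ₘ f) ≫ eComp V X Y Z)
        = (ihom.adjunction X).homEquiv _ _ ∘
          (fun g : Y ⊗ A ⟶ Z => ((α_ X v A).inv ≫ uncurry u ▷ A) ≫ g) ∘
          ((ihom.adjunction Y).homEquiv _ _).symm := by
    intro A Z
    funext f
    simp only [Function.comp_apply, MonoidalClosed.homEquiv_apply_eq,
      MonoidalClosed.homEquiv_symm_apply_eq, Category.assoc, ← uncurry_tensorHom_comp,
      MonoidalClosed.enrichedCategorySelf_comp, MonoidalClosed.curry_uncurry]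
  calc IsTensor V v X Y u
      ↔ ∀ A Z : V, Function.Bijective
          (fun g : Y ⊗ A ⟶ Z => ((α_ X v A).inv ≫ uncurry u ▷ A) ≫ g) :=
        forall₂_congr fun A Z => by
          change Function.Bijective (fun f : A ⟶ (ihom Y).obj Z => (u ⊗ₘ f) ≫ eComp V X Y Z) ↔ _
          rw [transpose, Equiv.comp_bijective, Equiv.bijective_comp]
    _ ↔ ∀ A : V, IsIso ((α_ X v A).inv ≫ uncurry u ▷ A) :=
        forall_congr' fun A => (isIso_iff_coyoneda_map_bijective _).symm
    _ ↔ IsIso (uncurry u) := by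
        refine ⟨fun h => ?_, fun _ _ => inferInstance⟩
        have : IsIso (uncurry u ▷ 𝟙_ V) := IsIso.of_isIso_comp_left (α_ X v (𝟙_ V)).inv _
        rw [← Category.comp_id (uncurry u), ← Iso.inv_hom_id (ρ_ Y),
          rightUnitor_inv_naturality_assoc]
        infer_instance

theorem dualTensorToEnd_eq_uncurry (v : V) :
    dualTensorToEnd v
      = uncurry (curry (λ_ v).hom ≫ curry (MonoidalClosed.comp v (𝟙_ V) v)) := by
  refine (uncurry_injective ?_).symm
  rw [uncurry_natural_left, uncurry_curry, dualTensorToEnd, uncurry_curry, ← id_tensorHom,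
    uncurry_tensorHom_comp, MonoidalClosed.uncurry_id_eq_ev, uncurry_curry]

theorem isTensor_unit (v : V) : IsTensor V v (𝟙_ V) v (curry (λ_ v).hom) := by
  rw [isTensor_self_iff, uncurry_curry]
  infer_instance

theorem hasLeftDualObj_of_preservesTensor (v : V)
    (h : PreservesTensor V (ihomEnrichedFunctor v) v (𝟙_ V) v (curry (λ_ v).hom)) :
    HasLeftDualObj V v := by
  have : IsIso (dualTensorToEnd v) := by
    rw [dualTensorToEnd_eq_uncurry, ← isTensor_self_iff]
    exact h
  exact hasLeftDualObj_of_isIso_dualTensorToEnd v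

end SelfEnriched

end

/-- Proposition 2 of the paper: over a right-closed monoidal category
`V`, tensors by `v` are absolute if and only if `v` admits a left dual in `V`. -/
theorem tensors_absolute_iff_hasLeftDual
    (hV : RightClosed V) (v : V) :
    (∀ (C D : Type u) (_ : EnrichedCategory V C) (_ : EnrichedCategory V D)
        (F : EnrichedFunctor V C D) (X Y : C) (u : v ⟶ (X ⟶[V] Y)),
      IsTensor V v X Y u → PreservesTensor V F v X Y u) ↔ HasLeftDualObj V v := by
  refine ⟨fun h => ?_, tensorsAbsolute_of_hasLeftDualObj⟩
  let _ : MonoidalClosed V := ⟨fun w => have := hV w; ⟨_, Adjunction.ofIsLeftAdjoint _⟩⟩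
  exact hasLeftDualObj_of_preservesTensor v
    (h V V _ _ (ihomEnrichedFunctor v) _ _ _ (isTensor_unit v))

end Paper
end

section
/- Let W be a bicategory, C a W-category, X an object of C of extent x, and W ∈ W(x,y) a 1-cell admitting a left adjoint W* ∈ W(y,x) with unit η : I_y → W ⊗ W* and counit ε : W* ⊗ W → I_x. Then for any object Y of C of extent y, there is a bijective correspondence between: (a) 2-cells u : W → C(X,Y) exhibiting Y as the tensor W·X; and (b) pairs of 2-cells u : W → C(X,Y) and u* : W* → C(Y,X) such that μ ∘ (u ⊗ u*) ∘ η = ι_Y : I_y → C(Y,Y) and μ ∘ (u* ⊗ u) = ι_X ∘ ε : W* ⊗ W → C(X,X). -/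
/-!
Pasting with `u` gives maps `Φ_g : (g ⟶ C(Y,Z)) → (f ≫ g ⟶ C(X,Z))`, and a 2-cell
`u* : f* ⟶ C(Y,X)` gives maps `Ψ_g` back: whisker by `f*`, precompose with the unit and paste
with `u*`. The counit square and the right zigzag identity make `Ψ` a right inverse of `Φ`; the
unit square and the left unit law of `C` make it a left inverse. Conversely, if every `Φ_g` is
bijective, the counit square says `Φ_{f*} u* = ε ≫ ι_X`, which determines `u*`; then `Ψ_𝟙` is a
right inverse of the bijection `Φ_𝟙`, hence a left inverse too, and `Ψ_𝟙 (Φ_𝟙 ι_Y) = ι_Y` is the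
unit square.

The paper writes 1-cell composition in the opposite order: its `f ⊗ f*` is `f* ≫ f` here.
-/
universe w₁ w v u

open CategoryTheory Bicategory

namespace Paper

variable (W : Type u) [Bicategory.{w, v} W]

/-- A `W`-category, for `W` a bicategory: a family of objects indexed by their extents,
hom 1-cells `C(X,Y) : εX ⟶ εY`, together with identity and composition 2-cells
satisfying the usual associativity and unit axioms. -/
structure WCat where
  Obj : W → Type w₁
  Hom : ∀ {x y : W}, Obj x → Obj y → (x ⟶ y)
  eid : ∀ {x} (X : Obj x), 𝟙 x ⟶ Hom X X
  ecomp : ∀ {x y z} (X : Obj x) (Y : Obj y) (Z : Obj z),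
    (Hom X Y ≫ Hom Y Z) ⟶ Hom X Z
  id_comp : ∀ {x y} (X : Obj x) (Y : Obj y),
    (eid X ▷ Hom X Y) ≫ ecomp X X Y = (λ_ (Hom X Y)).hom
  comp_id : ∀ {x y} (X : Obj x) (Y : Obj y),
    (Hom X Y ◁ eid Y) ≫ ecomp X Y Y = (ρ_ (Hom X Y)).hom
  assoc : ∀ {x y z t} (X : Obj x) (Y : Obj y) (Z : Obj z) (T : Obj t),
    (ecomp X Y Z ▷ Hom Z T) ≫ ecomp X Z T =
      (α_ (Hom X Y) (Hom Y Z) (Hom Z T)).hom ≫ (Hom X Y ◁ ecomp Y Z T) ≫ ecomp X Y T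

variable {W}

/-- A `W`-functor: an extent-preserving map on objects together with 2-cells on homs,
compatible with identities and composition. -/
structure WFunctor (C D : WCat.{w₁} W) where
  obj : ∀ {x}, C.Obj x → D.Obj x
  map : ∀ {x y} (X : C.Obj x) (Y : C.Obj y), C.Hom X Y ⟶ D.Hom (obj X) (obj Y)
  map_id : ∀ {x} (X : C.Obj x), C.eid X ≫ map X X = D.eid (obj X)
  map_comp : ∀ {x y z} (X : C.Obj x) (Y : C.Obj y) (Z : C.Obj z),
    C.ecomp X Y Z ≫ map X Z =
      (map X Y ▷ C.Hom Y Z) ≫ (D.Hom (obj X) (obj Y) ◁ map Y Z) ≫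
        D.ecomp (obj X) (obj Y) (obj Z)

/-- A `W`-natural transformation between `W`-functors. -/
structure WTrans {C D : WCat.{w₁} W} (G G' : WFunctor C D) where
  app : ∀ {x} (X : C.Obj x), 𝟙 x ⟶ D.Hom (G.obj X) (G'.obj X)
  naturality : ∀ {x y} (X : C.Obj x) (Y : C.Obj y),
    (λ_ (C.Hom X Y)).inv ≫ (app X ▷ C.Hom X Y) ≫
      (D.Hom (G.obj X) (G'.obj X) ◁ G'.map X Y) ≫
        D.ecomp (G.obj X) (G'.obj X) (G'.obj Y) =
    (ρ_ (C.Hom X Y)).inv ≫ (G.map X Y ▷ 𝟙 y) ≫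
      (D.Hom (G.obj X) (G.obj Y) ◁ app Y) ≫
        D.ecomp (G.obj X) (G.obj Y) (G'.obj Y)

/-- The 2-cell `u : f ⟶ C(X,Y)` exhibits `Y` as the tensor `f · X`: for every 1-cell
`g` out of the extent of `Y` and every object `Z`, pasting with `u` gives a bijection
between 2-cells `g ⟶ C(Y,Z)` and 2-cells `f ≫ g ⟶ C(X,Z)`. -/
def IsWTensor (C : WCat.{w₁} W) {x y : W} (X : C.Obj x) (f : x ⟶ y) (Y : C.Obj y)
    (u : f ⟶ C.Hom X Y) : Prop :=
  ∀ {z : W} (g : y ⟶ z) (Z : C.Obj z), Function.Bijective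
    (fun θ : g ⟶ C.Hom Y Z =>
      (u ▷ g) ≫ (C.Hom X Y ◁ θ) ≫ C.ecomp X Y Z)

/-- A `W`-functor `G` preserves the tensor `(Y, u)` of `X` by `f`. -/
def PreservesWTensor {C D : WCat.{w₁} W} (G : WFunctor C D) {x y : W} (X : C.Obj x)
    (f : x ⟶ y) (Y : C.Obj y) (u : f ⟶ C.Hom X Y) : Prop :=
  IsWTensor D (G.obj X) f (G.obj Y) (u ≫ G.map X Y)

end Paper


namespace Paper

variable {W : Type u} [Bicategory.{w, v} W]

lemma WCat.whiskerLeft_ecomp_ecomp (C : WCat.{w₁} W) {x y z t : W}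
    (X : C.Obj x) (Y : C.Obj y) (Z : C.Obj z) (T : C.Obj t) :
    (C.Hom X Y ◁ C.ecomp Y Z T) ≫ C.ecomp X Y T =
      (α_ _ _ _).inv ≫ (C.ecomp X Y Z ▷ C.Hom Z T) ≫ C.ecomp X Z T := by
  rw [C.assoc]
  simp

section Precomp

variable {C : WCat.{w₁} W} {x y z : W} {X : C.Obj x} {f : x ⟶ y} {Y : C.Obj y}

def precomp (u : f ⟶ C.Hom X Y) (g : y ⟶ z) (Z : C.Obj z) (θ : g ⟶ C.Hom Y Z) :
    f ≫ g ⟶ C.Hom X Z :=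
  (u ▷ g) ≫ (C.Hom X Y ◁ θ) ≫ C.ecomp X Y Z

lemma precomp_eid (u : f ⟶ C.Hom X Y) : precomp u (𝟙 y) Y (C.eid Y) = (ρ_ f).hom ≫ u := by
  rw [precomp, C.comp_id]
  bicategory

variable {fstar : y ⟶ x}

def precompInverse (adj : Adjunction fstar f) (ustar : fstar ⟶ C.Hom Y X) (g : y ⟶ z)
    (Z : C.Obj z) (φ : f ≫ g ⟶ C.Hom X Z) : g ⟶ C.Hom Y Z :=
  (λ_ g).inv ≫ (adj.unit ▷ g) ≫ (α_ fstar f g).hom ≫ (fstar ◁ φ) ≫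
    (ustar ▷ C.Hom X Z) ≫ C.ecomp Y X Z

lemma precompInverse_rightUnitor_hom_comp (adj : Adjunction fstar f) (u : f ⟶ C.Hom X Y)
    (ustar : fstar ⟶ C.Hom Y X) :
    precompInverse adj ustar (𝟙 y) Y ((ρ_ f).hom ≫ u) =
      adj.unit ≫ (ustar ▷ f) ≫ (C.Hom Y X ◁ u) ≫ C.ecomp Y X Y := by
  calc precompInverse adj ustar (𝟙 y) Y ((ρ_ f).hom ≫ u)
      = adj.unit ⊗≫ ((fstar ◁ u) ≫ (ustar ▷ C.Hom X Y)) ≫ C.ecomp Y X Y := by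
        rw [precompInverse]; bicategory
    _ = adj.unit ≫ (ustar ▷ f) ≫ (C.Hom Y X ◁ u) ≫ C.ecomp Y X Y := by
        rw [whisker_exchange]; bicategory

lemma precomp_precompInverse (adj : Adjunction fstar f) (u : f ⟶ C.Hom X Y)
    (ustar : fstar ⟶ C.Hom Y X) (hcounit : precomp u fstar X ustar = adj.counit ≫ C.eid X)
    (g : y ⟶ z) (Z : C.Obj z) (φ : f ≫ g ⟶ C.Hom X Z) :
    precomp u g Z (precompInverse adj ustar g Z φ) = φ := by
  rw [precomp] at hcounit
  calc precomp u g Z (precompInverse adj ustar g Z φ)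
      = 𝟙 _ ⊗≫ ((u ▷ (𝟙 y ≫ g)) ≫ (C.Hom X Y ◁ (adj.unit ▷ g))) ⊗≫
          (C.Hom X Y ◁ (fstar ◁ φ)) ⊗≫ ((C.Hom X Y ◁ ustar) ▷ C.Hom X Z) ⊗≫
          ((C.Hom X Y ◁ C.ecomp Y X Z) ≫ C.ecomp X Y Z) := by
        rw [precomp, precompInverse]; bicategory
    _ = 𝟙 _ ⊗≫ (f ◁ (adj.unit ▷ g)) ⊗≫
          ((u ▷ (fstar ≫ f ≫ g)) ≫ (C.Hom X Y ◁ (fstar ◁ φ))) ⊗≫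
          ((C.Hom X Y ◁ ustar) ▷ C.Hom X Z) ⊗≫
          ((C.Hom X Y ◁ C.ecomp Y X Z) ≫ C.ecomp X Y Z) := by
        rw [← whisker_exchange]; bicategory
    _ = 𝟙 _ ⊗≫ (f ◁ (adj.unit ▷ g)) ⊗≫ (f ◁ (fstar ◁ φ)) ⊗≫
          (((u ▷ fstar) ≫ (C.Hom X Y ◁ ustar) ≫ C.ecomp X Y X) ▷ C.Hom X Z) ⊗≫
          C.ecomp X X Z := by
        rw [← whisker_exchange, C.whiskerLeft_ecomp_ecomp]; bicategory
    _ = 𝟙 _ ⊗≫ (f ◁ (adj.unit ▷ g)) ⊗≫ (((f ≫ fstar) ◁ φ) ≫ (adj.counit ▷ C.Hom X Z)) ⊗≫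
          ((C.eid X ▷ C.Hom X Z) ≫ C.ecomp X X Z) := by
        rw [hcounit]; bicategory
    _ = 𝟙 _ ⊗≫ (rightZigzag adj.unit adj.counit ▷ g) ⊗≫ φ := by
        rw [whisker_exchange, C.id_comp]; bicategory
    _ = φ := by
        rw [adj.right_triangle]; bicategory

lemma precompInverse_precomp (adj : Adjunction fstar f) (u : f ⟶ C.Hom X Y)
    (ustar : fstar ⟶ C.Hom Y X)
    (hunit : adj.unit ≫ (ustar ▷ f) ≫ (C.Hom Y X ◁ u) ≫ C.ecomp Y X Y = C.eid Y)
    (g : y ⟶ z) (Z : C.Obj z) (θ : g ⟶ C.Hom Y Z) :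
    precompInverse adj ustar g Z (precomp u g Z θ) = θ := by
  calc precompInverse adj ustar g Z (precomp u g Z θ)
      = 𝟙 _ ⊗≫ (adj.unit ▷ g) ⊗≫ ((fstar ◁ precomp u g Z θ) ≫ (ustar ▷ C.Hom X Z)) ⊗≫
          C.ecomp Y X Z := by
        rw [precompInverse]; bicategory
    _ = 𝟙 _ ⊗≫ (adj.unit ▷ g) ⊗≫ (ustar ▷ (f ≫ g)) ⊗≫
          (C.Hom Y X ◁ (u ▷ g)) ⊗≫ (C.Hom Y X ◁ (C.Hom X Y ◁ θ)) ⊗≫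
          ((C.Hom Y X ◁ C.ecomp X Y Z) ≫ C.ecomp Y X Z) := by
        rw [whisker_exchange, precomp]; bicategory
    _ = 𝟙 _ ⊗≫ (adj.unit ▷ g) ⊗≫ ((ustar ▷ f) ▷ g) ⊗≫ ((C.Hom Y X ◁ u) ▷ g) ⊗≫
          (((C.Hom Y X ≫ C.Hom X Y) ◁ θ) ≫ (C.ecomp Y X Y ▷ C.Hom Y Z)) ⊗≫
          C.ecomp Y Y Z := by
        rw [C.whiskerLeft_ecomp_ecomp]; bicategory
    _ = 𝟙 _ ⊗≫ ((adj.unit ≫ (ustar ▷ f) ≫ (C.Hom Y X ◁ u) ≫ C.ecomp Y X Y) ▷ g) ⊗≫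
          ((C.Hom Y Y ◁ θ) ≫ C.ecomp Y Y Z) := by
        rw [whisker_exchange]; bicategory
    _ = 𝟙 _ ⊗≫ ((C.eid Y ▷ g) ≫ (C.Hom Y Y ◁ θ)) ⊗≫ C.ecomp Y Y Z := by
        rw [hunit]; bicategory
    _ = 𝟙 _ ⊗≫ (𝟙 y ◁ θ) ⊗≫ ((C.eid Y ▷ C.Hom Y Z) ≫ C.ecomp Y Y Z) := by
        rw [← whisker_exchange]; bicategory
    _ = θ := by
        rw [C.id_comp]; bicategory

end Precomp

/-- **Statement 13**: if `f` admits a left adjoint `f*`, then `u : f ⟶ C(X,Y)` exhibits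
`Y` as the tensor `f · X` iff there is a unique `u* : f* ⟶ C(Y,X)` rendering the two
squares commutative. -/
theorem isWTensor_iff_existsUnique_adjoint_mate
    {W : Type u} [Bicategory.{w, v} W] (C : WCat.{w₁} W) {x y : W}
    (X : C.Obj x) (f : x ⟶ y) (fstar : y ⟶ x) (adj : Bicategory.Adjunction fstar f)
    (Y : C.Obj y) (u : f ⟶ C.Hom X Y) :
    IsWTensor C X f Y u ↔
      ∃! ustar : fstar ⟶ C.Hom Y X,
        (adj.unit ≫ (ustar ▷ f) ≫ (C.Hom Y X ◁ u) ≫ C.ecomp Y X Y = C.eid Y) ∧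
        ((u ▷ fstar) ≫ (C.Hom X Y ◁ ustar) ≫ C.ecomp X Y X = adj.counit ≫ C.eid X) := by
  constructor
  · intro hT
    obtain ⟨ustar, hcounit⟩ := (hT fstar X).surjective (adj.counit ≫ C.eid X)
    have hinv : Function.LeftInverse (precompInverse adj ustar (𝟙 y) Y) (precomp u (𝟙 y) Y) :=
      Function.LeftInverse.rightInverse_of_injective
        (precomp_precompInverse adj u ustar hcounit (𝟙 y) Y) (hT (𝟙 y) Y).injective
    have hunit : adj.unit ≫ (ustar ▷ f) ≫ (C.Hom Y X ◁ u) ≫ C.ecomp Y X Y = C.eid Y := by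
      rw [← precompInverse_rightUnitor_hom_comp, ← precomp_eid]
      exact hinv (C.eid Y)
    refine ⟨ustar, ⟨hunit, hcounit⟩, fun v ⟨_, hv⟩ => ?_⟩
    exact (hT fstar X).injective (hv.trans hcounit.symm)
  · rintro ⟨ustar, ⟨hunit, hcounit⟩, -⟩ z g Z
    exact Function.bijective_iff_has_inverse.2 ⟨precompInverse adj ustar g Z,
      precompInverse_precomp adj u ustar hunit g Z,
      precomp_precompInverse adj u ustar hcounit g Z⟩

end Paper
end

section
/- Let W be a right-closed bicategory, i.e. one in which for every 1-cell W ∈ W(x,y) and object z, the functor (−) ⊗ W : W(y,z) → W(x,z) admits a right adjoint [W,−]. Then tensors by a 1-cell W ∈ W(x,y) in W-categories are absolute (preserved by every W-functor) if and only if W admits a left adjoint in W; moreover, when tensors by W are absolute, the 1-cell [W, I_x] is a left adjoint of W. -/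
/-!
STATEMENT 14 (Proposition 27 of the paper): Let W be a right-closed bicategory: for
every 1-cell `f ∈ W(x,y)` and object `z`, the functor `(−) ⊗ f : W(y,z) → W(x,z)`
(in Mathlib's diagrammatic order, the precomposition functor `g ↦ f ≫ g`) admits a
right adjoint `[f, −] : W(x,z) → W(y,z)`.  Then tensors by a 1-cell `f ∈ W(x,y)` in
W-categories are absolute (preserved by every W-functor) if and only if `f` admits a
left adjoint in W; moreover, when tensors by `f` are absolute, the 1-cell `[f, 𝟙 x]`
is a left adjoint of `f`.
-/
universe w₁ w v u

open CategoryTheory Bicategory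

namespace Paper

variable {W : Type u} [Bicategory.{w, v} W]

/-- The precomposition functor `g ↦ f ≫ g` (the paper's `(−) ⊗ f`). -/
@[simps]
def precompF {x y : W} (f : x ⟶ y) (z : W) : (y ⟶ z) ⥤ (x ⟶ z) where
  obj g := f ≫ g
  map θ := f ◁ θ

/-- A right-closure structure on a bicategory: chosen right adjoints `[f, −]` to all
the precomposition functors `(−) ⊗ f`. -/
structure RightClosedStr (W : Type u) [Bicategory.{w, v} W] where
  ihom : ∀ {x y : W} (f : x ⟶ y) (z : W), (x ⟶ z) ⥤ (y ⟶ z)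
  adj : ∀ {x y : W} (f : x ⟶ y) (z : W), precompF f z ⊣ ihom f z

/-!
If `g ⊣ f`, a 2-cell `u : f ⟶ C(X, Y)` exhibits `Y` as `f · X` exactly when there is a
`v : g ⟶ C(Y, X)` such that `u` and `v` paste to the counit and the unit of the adjunction
(`IsAdjointPair`). These equations are preserved by every `W`-functor, so such tensors are
absolute.

Conversely, let `coslice x` be the `W`-category of 1-cells out of `x` with the internal homs
`[h, k]` as hom-objects. There a 2-cell `A : k ⟶ [h, h']` exhibits `h'` as `k · h` iff its
transpose `h ≫ k ⟶ h'` is invertible. So `f` is the tensor `f · 𝟙 x`, and its image under the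
representable `W`-functor `[f, −]` is a tensor iff the comparison `[f, 𝟙 x] ≫ f ⟶ [f, f]` is
invertible. Composing the identity `𝟙 ⟶ [f, f]` with its inverse then gives the unit of an
adjunction `[f, 𝟙 x] ⊣ f` whose counit is evaluation.
-/

namespace WCat

variable (C : WCat.{w₁} W) {x y z t : W} {X : C.Obj x} {Y : C.Obj y} {Z : C.Obj z}
  {T : C.Obj t} {k k' : x ⟶ y} {l l' : y ⟶ z} {m : z ⟶ t}

theorem whiskerLeft_ecomp_ecomp_s3 (X : C.Obj x) (Y : C.Obj y) (Z : C.Obj z) (T : C.Obj t) :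
    (C.Hom X Y ◁ C.ecomp Y Z T) ≫ C.ecomp X Y T =
      (α_ (C.Hom X Y) (C.Hom Y Z) (C.Hom Z T)).inv ≫
        (C.ecomp X Y Z ▷ C.Hom Z T) ≫ C.ecomp X Z T := by
  rw [C.assoc, Iso.inv_hom_id_assoc]

def paste (a : k ⟶ C.Hom X Y) (b : l ⟶ C.Hom Y Z) : k ≫ l ⟶ C.Hom X Z :=
  (a ▷ l) ≫ (C.Hom X Y ◁ b) ≫ C.ecomp X Y Z

variable {C}

theorem comp_paste (σ : k' ⟶ k) (a : k ⟶ C.Hom X Y) (b : l ⟶ C.Hom Y Z) :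
    C.paste (σ ≫ a) b = (σ ▷ l) ≫ C.paste a b := by
  simp only [paste, comp_whiskerRight, Category.assoc]

theorem paste_comp (a : k ⟶ C.Hom X Y) (τ : l' ⟶ l) (b : l ⟶ C.Hom Y Z) :
    C.paste a (τ ≫ b) = (k ◁ τ) ≫ C.paste a b := by
  simp only [paste, Bicategory.whiskerLeft_comp, Category.assoc, whisker_exchange_assoc]

theorem eid_paste {l : x ⟶ z} (b : l ⟶ C.Hom X Z) : C.paste (C.eid X) b = (λ_ l).hom ≫ b := by
  rw [paste, ← whisker_exchange_assoc, C.id_comp, id_whiskerLeft]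
  simp

theorem paste_eid (a : k ⟶ C.Hom X Y) : C.paste a (C.eid Y) = (ρ_ k).hom ≫ a := by
  rw [paste, C.comp_id, whiskerRight_id]
  simp

theorem paste_paste (a : k ⟶ C.Hom X Y) (b : l ⟶ C.Hom Y Z) (c : m ⟶ C.Hom Z T) :
    C.paste (C.paste a b) c = (α_ k l m).hom ≫ C.paste a (C.paste b c) := by
  simp only [paste, comp_whiskerRight, Bicategory.whiskerLeft_comp, Category.assoc,
    ← whisker_exchange_assoc (C.ecomp X Y Z), C.assoc]
  bicategory

end WCat

theorem WFunctor.paste_map {C D : WCat.{w₁} W} (G : WFunctor C D) {x y z : W} {X : C.Obj x}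
    {Y : C.Obj y} {Z : C.Obj z} {k : x ⟶ y} {l : y ⟶ z} (a : k ⟶ C.Hom X Y)
    (b : l ⟶ C.Hom Y Z) :
    D.paste (a ≫ G.map X Y) (b ≫ G.map Y Z) = C.paste a b ≫ G.map X Z := by
  simp only [WCat.paste, comp_whiskerRight, Bicategory.whiskerLeft_comp, Category.assoc,
    G.map_comp, whisker_exchange_assoc]

theorem _root_.CategoryTheory.Bicategory.Adjunction.whiskerLeft_unit_comp_counit {x y : W}
    {f : x ⟶ y} {g : y ⟶ x} (adj : Bicategory.Adjunction g f) :
    (f ◁ adj.unit) ≫ (α_ f g f).inv ≫ (adj.counit ▷ f) ≫ (λ_ f).hom = (ρ_ f).hom := by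
  calc _ = (f ◁ adj.unit ⊗≫ adj.counit ▷ f) ≫ (λ_ f).hom := by bicategory
    _ = (ρ_ f).hom := by rw [← rightZigzag, adj.right_triangle]; simp

theorem _root_.CategoryTheory.Bicategory.Adjunction.whiskerLeft_unit_comp_counit_whiskerRight
    {x y z : W} {f : x ⟶ y} {g : y ⟶ x} (adj : Bicategory.Adjunction g f) (l : y ⟶ z) :
    (f ◁ ((λ_ l).inv ≫ (adj.unit ▷ l) ≫ (α_ g f l).hom)) ≫ (α_ f g (f ≫ l)).inv ≫
      (adj.counit ▷ (f ≫ l)) ≫ (λ_ (f ≫ l)).hom = 𝟙 (f ≫ l) := by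
  calc _ = 𝟙 _ ⊗≫ (((f ◁ adj.unit) ≫ (α_ f g f).inv ≫ (adj.counit ▷ f) ≫ (λ_ f).hom) ▷ l) ⊗≫
        𝟙 _ := by bicategory
    _ = 𝟙 (f ≫ l) := by rw [adj.whiskerLeft_unit_comp_counit]; bicategory

section AdjointPair

variable {C : WCat.{w₁} W} {x y : W} {X : C.Obj x} {Y : C.Obj y} {f : x ⟶ y} {g : y ⟶ x}
  {adj : Bicategory.Adjunction g f} {u : f ⟶ C.Hom X Y} {v : g ⟶ C.Hom Y X}

def IsAdjointPair (adj : Bicategory.Adjunction g f) (u : f ⟶ C.Hom X Y)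
    (v : g ⟶ C.Hom Y X) : Prop :=
  C.paste u v = adj.counit ≫ C.eid X ∧ adj.unit ≫ C.paste v u = C.eid Y

theorem IsAdjointPair.isWTensor (h : IsAdjointPair adj u v) : IsWTensor C X f Y u := by
  intro z l Z
  rw [Function.bijective_iff_has_inverse]
  refine ⟨fun φ => ((λ_ l).inv ≫ (adj.unit ▷ l) ≫ (α_ g f l).hom) ≫ C.paste v φ,
    fun θ => ?_, fun φ => ?_⟩
  · calc ((λ_ l).inv ≫ (adj.unit ▷ l) ≫ (α_ g f l).hom) ≫ C.paste v (C.paste u θ)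
        = (λ_ l).inv ≫ C.paste (adj.unit ≫ C.paste v u) θ := by
          simp only [WCat.comp_paste, WCat.paste_paste, Category.assoc]
      _ = θ := by rw [h.2, WCat.eid_paste, Iso.inv_hom_id_assoc]
  · calc C.paste u (((λ_ l).inv ≫ (adj.unit ▷ l) ≫ (α_ g f l).hom) ≫ C.paste v φ)
        = ((f ◁ ((λ_ l).inv ≫ (adj.unit ▷ l) ≫ (α_ g f l).hom)) ≫ (α_ f g (f ≫ l)).inv ≫
            (adj.counit ▷ (f ≫ l)) ≫ (λ_ (f ≫ l)).hom) ≫ φ := by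
          rw [WCat.paste_comp, ← Iso.inv_hom_id_assoc (α_ f g (f ≫ l)) (C.paste u _),
            ← WCat.paste_paste, h.1, WCat.comp_paste, WCat.eid_paste]
          simp only [Category.assoc]
      _ = φ := by rw [adj.whiskerLeft_unit_comp_counit_whiskerRight, Category.id_comp]

theorem IsWTensor.exists_isAdjointPair (hT : IsWTensor C X f Y u)
    (adj : Bicategory.Adjunction g f) : ∃ v, IsAdjointPair adj u v := by
  obtain ⟨v, hv⟩ := (hT g X).surjective (adj.counit ≫ C.eid X)
  replace hv : C.paste u v = adj.counit ≫ C.eid X := hv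
  refine ⟨v, hv, (hT (𝟙 y) Y).injective ?_⟩
  change C.paste u (adj.unit ≫ C.paste v u) = C.paste u (C.eid Y)
  calc C.paste u (adj.unit ≫ C.paste v u)
      = ((f ◁ adj.unit) ≫ (α_ f g f).inv ≫ (adj.counit ▷ f) ≫ (λ_ f).hom) ≫ u := by
        rw [WCat.paste_comp, ← Iso.inv_hom_id_assoc (α_ f g f) (C.paste u _),
          ← WCat.paste_paste, hv, WCat.comp_paste, WCat.eid_paste]
        simp only [Category.assoc]
    _ = C.paste u (C.eid Y) := by rw [adj.whiskerLeft_unit_comp_counit, WCat.paste_eid]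

theorem IsAdjointPair.map {D : WCat.{w₁} W} (h : IsAdjointPair adj u v) (G : WFunctor C D) :
    IsAdjointPair adj (u ≫ G.map X Y) (v ≫ G.map Y X) :=
  ⟨by rw [G.paste_map, h.1, Category.assoc, G.map_id],
    by rw [G.paste_map, reassoc_of% h.2, G.map_id]⟩

theorem preservesWTensor_of_adjunction {D : WCat.{w₁} W} (G : WFunctor C D)
    (adj : Bicategory.Adjunction g f) (hT : IsWTensor C X f Y u) :
    PreservesWTensor G X f Y u :=
  let ⟨_, h⟩ := hT.exists_isAdjointPair adj
  (h.map G).isWTensor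

end AdjointPair

namespace RightClosedStr

variable (rc : RightClosedStr W)

abbrev hom {x y z : W} (f : x ⟶ y) (h : x ⟶ z) : y ⟶ z := (rc.ihom f z).obj h

abbrev ev {x y z : W} (f : x ⟶ y) (h : x ⟶ z) : f ≫ rc.hom f h ⟶ h :=
  (rc.adj f z).counit.app h

abbrev curry {x y z : W} (f : x ⟶ y) {g : y ⟶ z} {h : x ⟶ z} (ψ : f ≫ g ⟶ h) :
    g ⟶ rc.hom f h :=
  (rc.adj f z).homEquiv g h ψ

theorem whiskerLeft_ev_bijective {x y z : W} (f : x ⟶ y) (g : y ⟶ z) (h : x ⟶ z) :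
    Function.Bijective fun θ : g ⟶ rc.hom f h => (f ◁ θ) ≫ rc.ev f h :=
  ((rc.adj f z).homEquiv g h).symm.bijective

theorem whiskerLeft_curry_ev {x y z : W} (f : x ⟶ y) {g : y ⟶ z} {h : x ⟶ z}
    (ψ : f ≫ g ⟶ h) : (f ◁ rc.curry f ψ) ≫ rc.ev f h = ψ :=
  ((rc.adj f z).homEquiv g h).symm_apply_apply ψ

theorem hom_ext {x y z : W} (f : x ⟶ y) {g : y ⟶ z} {h : x ⟶ z} {θ₁ θ₂ : g ⟶ rc.hom f h}
    (H : (f ◁ θ₁) ≫ rc.ev f h = (f ◁ θ₂) ≫ rc.ev f h) : θ₁ = θ₂ :=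
  (rc.whiskerLeft_ev_bijective f g h).injective H

def ecomp {w a b c : W} (h : w ⟶ a) (k : w ⟶ b) (l : w ⟶ c) :
    rc.hom h k ≫ rc.hom k l ⟶ rc.hom h l :=
  rc.curry h ((α_ h (rc.hom h k) (rc.hom k l)).inv ≫ (rc.ev h k ▷ rc.hom k l) ≫ rc.ev k l)

theorem whiskerLeft_ecomp_ev {w a b c : W} (h : w ⟶ a) (k : w ⟶ b) (l : w ⟶ c) :
    (h ◁ rc.ecomp h k l) ≫ rc.ev h l =
      (α_ h (rc.hom h k) (rc.hom k l)).inv ≫ (rc.ev h k ▷ rc.hom k l) ≫ rc.ev k l :=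
  rc.whiskerLeft_curry_ev h _

def eid {w a : W} (h : w ⟶ a) : 𝟙 a ⟶ rc.hom h h := rc.curry h (ρ_ h).hom

theorem whiskerLeft_eid_ev {w a : W} (h : w ⟶ a) : (h ◁ rc.eid h) ≫ rc.ev h h = (ρ_ h).hom :=
  rc.whiskerLeft_curry_ev h _

theorem eid_whiskerRight_ecomp {w a b : W} (h : w ⟶ a) (k : w ⟶ b) :
    (rc.eid h ▷ rc.hom h k) ≫ rc.ecomp h h k = (λ_ (rc.hom h k)).hom := by
  apply rc.hom_ext h
  calc (h ◁ ((rc.eid h ▷ rc.hom h k) ≫ rc.ecomp h h k)) ≫ rc.ev h k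
      = 𝟙 _ ⊗≫ (h ◁ (rc.eid h ▷ rc.hom h k)) ⊗≫ ((h ◁ rc.ecomp h h k) ≫ rc.ev h k) := by
        bicategory
    _ = 𝟙 _ ⊗≫ (((h ◁ rc.eid h) ≫ rc.ev h h) ▷ rc.hom h k) ⊗≫ rc.ev h k := by
        rw [whiskerLeft_ecomp_ev]; bicategory
    _ = (h ◁ (λ_ (rc.hom h k)).hom) ≫ rc.ev h k := by
        rw [whiskerLeft_eid_ev]; bicategory

theorem whiskerLeft_eid_ecomp {w a b : W} (h : w ⟶ a) (k : w ⟶ b) :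
    (rc.hom h k ◁ rc.eid k) ≫ rc.ecomp h k k = (ρ_ (rc.hom h k)).hom := by
  apply rc.hom_ext h
  calc (h ◁ ((rc.hom h k ◁ rc.eid k) ≫ rc.ecomp h k k)) ≫ rc.ev h k
      = 𝟙 _ ⊗≫ (((h ≫ rc.hom h k) ◁ rc.eid k) ≫ (rc.ev h k ▷ rc.hom k k)) ⊗≫
          rc.ev k k := by
        rw [Bicategory.whiskerLeft_comp, Category.assoc, whiskerLeft_ecomp_ev]; bicategory
    _ = 𝟙 _ ⊗≫ (rc.ev h k ▷ 𝟙 b) ⊗≫ ((k ◁ rc.eid k) ≫ rc.ev k k) := by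
        rw [whisker_exchange]; bicategory
    _ = (h ◁ (ρ_ (rc.hom h k)).hom) ≫ rc.ev h k := by
        rw [whiskerLeft_eid_ev]; bicategory

theorem ecomp_whiskerRight_ecomp {w a b c d : W} (h : w ⟶ a) (k : w ⟶ b) (l : w ⟶ c)
    (t : w ⟶ d) :
    (rc.ecomp h k l ▷ rc.hom l t) ≫ rc.ecomp h l t =
      (α_ (rc.hom h k) (rc.hom k l) (rc.hom l t)).hom ≫
        (rc.hom h k ◁ rc.ecomp k l t) ≫ rc.ecomp h k t := by
  apply rc.hom_ext h
  calc (h ◁ ((rc.ecomp h k l ▷ rc.hom l t) ≫ rc.ecomp h l t)) ≫ rc.ev h t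
      = 𝟙 _ ⊗≫ (((h ◁ rc.ecomp h k l) ≫ rc.ev h l) ▷ rc.hom l t) ⊗≫ rc.ev l t := by
        rw [Bicategory.whiskerLeft_comp, Category.assoc, whiskerLeft_ecomp_ev]; bicategory
    _ = 𝟙 _ ⊗≫ ((rc.ev h k ▷ rc.hom k l) ▷ rc.hom l t) ⊗≫
          ((rc.ev k l ▷ rc.hom l t) ≫ rc.ev l t) := by
        rw [whiskerLeft_ecomp_ev]; bicategory
    _ = 𝟙 _ ⊗≫ ((rc.ev h k ▷ rc.hom k l) ▷ rc.hom l t) ⊗≫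
          ((k ◁ rc.ecomp k l t) ≫ rc.ev k t) := by
        rw [rc.whiskerLeft_ecomp_ev k l t]; bicategory
    _ = 𝟙 _ ⊗≫ (((h ≫ rc.hom h k) ◁ rc.ecomp k l t) ≫
          (rc.ev h k ▷ rc.hom k t)) ⊗≫ rc.ev k t := by
        rw [whisker_exchange]; bicategory
    _ = (h ◁ ((α_ (rc.hom h k) (rc.hom k l) (rc.hom l t)).hom ≫
          (rc.hom h k ◁ rc.ecomp k l t) ≫ rc.ecomp h k t)) ≫ rc.ev h t := by
        rw [Bicategory.whiskerLeft_comp, Bicategory.whiskerLeft_comp, Category.assoc,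
          Category.assoc, whiskerLeft_ecomp_ev]
        bicategory

abbrev coslice (w : W) : WCat.{v} W where
  Obj z := w ⟶ z
  Hom h k := rc.hom h k
  eid := rc.eid
  ecomp := rc.ecomp
  id_comp := rc.eid_whiskerRight_ecomp
  comp_id := rc.whiskerLeft_eid_ecomp
  assoc := rc.ecomp_whiskerRight_ecomp

theorem whiskerLeft_paste_ev {w a b c : W} {h : w ⟶ a} {h' : w ⟶ b} {h'' : w ⟶ c}
    {k : a ⟶ b} {l : b ⟶ c} (A : k ⟶ rc.hom h h') (B : l ⟶ rc.hom h' h'') :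
    (h ◁ (rc.coslice w).paste (Y := h') A B) ≫ rc.ev h h'' =
      (α_ h k l).inv ≫ (((h ◁ A) ≫ rc.ev h h') ▷ l) ≫ (h' ◁ B) ≫ rc.ev h' h'' := by
  calc (h ◁ (rc.coslice w).paste (Y := h') A B) ≫ rc.ev h h''
      = 𝟙 _ ⊗≫ (h ◁ A ▷ l) ⊗≫ (((h ≫ rc.hom h h') ◁ B) ≫ (rc.ev h h' ▷ rc.hom h' h'')) ⊗≫
          rc.ev h' h'' := by
        simp only [WCat.paste, Bicategory.whiskerLeft_comp, Category.assoc]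
        rw [rc.whiskerLeft_ecomp_ev]
        bicategory
    _ = _ := by rw [whisker_exchange]; bicategory

theorem coslice_paste_bijective_iff {w a b c : W} {h : w ⟶ a} {h' : w ⟶ b} {k : a ⟶ b}
    (A : k ⟶ rc.hom h h') (l : b ⟶ c) (Z : w ⟶ c) :
    Function.Bijective (fun θ : l ⟶ rc.hom h' Z => (rc.coslice w).paste (Y := h') A θ) ↔
      Function.Bijective fun ξ : h' ≫ l ⟶ Z =>
        ((α_ h k l).inv ≫ (((h ◁ A) ≫ rc.ev h h') ▷ l)) ≫ ξ := by
  have hcomm : (fun ψ => (h ◁ ψ) ≫ rc.ev h Z) ∘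
        (fun θ : l ⟶ rc.hom h' Z => (rc.coslice w).paste (Y := h') A θ) =
      (fun ξ : h' ≫ l ⟶ Z => ((α_ h k l).inv ≫ (((h ◁ A) ≫ rc.ev h h') ▷ l)) ≫ ξ) ∘
        (fun θ => (h' ◁ θ) ≫ rc.ev h' Z) :=
    funext fun θ => by simp only [Function.comp_apply, whiskerLeft_paste_ev, Category.assoc]
  rw [← Function.Bijective.of_comp_iff' (rc.whiskerLeft_ev_bijective h _ Z), hcomm,
    Function.Bijective.of_comp_iff _ (rc.whiskerLeft_ev_bijective h' l Z)]

theorem isWTensor_coslice_iff {w a b : W} {h : w ⟶ a} {h' : w ⟶ b} {k : a ⟶ b}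
    (A : k ⟶ rc.hom h h') :
    IsWTensor (rc.coslice w) h k h' A ↔ IsIso ((h ◁ A) ≫ rc.ev h h') := by
  constructor
  · intro hT
    have : IsIso ((α_ h k (𝟙 b)).inv ≫ (((h ◁ A) ≫ rc.ev h h') ▷ 𝟙 b)) :=
      isIso_of_coyoneda_map_bijective _ fun Z =>
        (rc.coslice_paste_bijective_iff A (𝟙 b) Z).mp (hT (𝟙 b) Z)
    have : IsIso (((h ◁ A) ≫ rc.ev h h') ▷ 𝟙 b) := IsIso.of_isIso_comp_left (α_ h k (𝟙 b)).inv _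
    rw [whiskerRight_id] at this
    have := IsIso.of_isIso_comp_left (ρ_ (h ≫ k)).hom (((h ◁ A) ≫ rc.ev h h') ≫ (ρ_ h').inv)
    exact IsIso.of_isIso_comp_right _ (ρ_ h').inv
  · intro _ c l Z
    exact (rc.coslice_paste_bijective_iff A l Z).mpr
      ((isIso_iff_coyoneda_map_bijective _).mp inferInstance Z)

section

variable {x y : W} (f : x ⟶ y)

theorem eid_comp_curry_ecomp {a : W} (h : x ⟶ a) :
    rc.eid h ≫ rc.curry (rc.hom f h) (rc.ecomp f h h) = rc.eid (rc.hom f h) := by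
  apply rc.hom_ext (rc.hom f h)
  rw [Bicategory.whiskerLeft_comp, Category.assoc, whiskerLeft_curry_ev, whiskerLeft_eid_ev]
  exact rc.whiskerLeft_eid_ecomp f h

theorem ecomp_comp_curry_ecomp {a b c : W} (h : x ⟶ a) (k : x ⟶ b) (l : x ⟶ c) :
    rc.ecomp h k l ≫ rc.curry (rc.hom f h) (rc.ecomp f h l) =
      (rc.coslice y).paste (X := rc.hom f h) (Y := rc.hom f k) (Z := rc.hom f l)
        (rc.curry (rc.hom f h) (rc.ecomp f h k)) (rc.curry (rc.hom f k) (rc.ecomp f k l)) := by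
  apply rc.hom_ext (rc.hom f h)
  rw [Bicategory.whiskerLeft_comp, Category.assoc, whiskerLeft_curry_ev, whiskerLeft_paste_ev,
    whiskerLeft_curry_ev, whiskerLeft_curry_ev]
  exact (rc.coslice x).whiskerLeft_ecomp_ecomp_s3 f h k l

def homFunctor : WFunctor (rc.coslice x) (rc.coslice y) where
  obj h := rc.hom f h
  map h k := rc.curry (rc.hom f h) (rc.ecomp f h k)
  map_id := rc.eid_comp_curry_ecomp f
  map_comp := rc.ecomp_comp_curry_ecomp f

def tensorUnit : f ⟶ rc.hom (𝟙 x) f := rc.curry (𝟙 x) (λ_ f).hom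

theorem isWTensor_tensorUnit : IsWTensor (rc.coslice x) (𝟙 x) f f (rc.tensorUnit f) :=
  (rc.isWTensor_coslice_iff _).mpr (by rw [tensorUnit, whiskerLeft_curry_ev]; infer_instance)

def comparison : rc.hom f (𝟙 x) ≫ f ⟶ rc.hom f f :=
  rc.curry f ((α_ f (rc.hom f (𝟙 x)) f).inv ≫ (rc.ev f (𝟙 x) ▷ f) ≫ (λ_ f).hom)

theorem whiskerLeft_comparison_ev :
    (f ◁ rc.comparison f) ≫ rc.ev f f =
      (α_ f (rc.hom f (𝟙 x)) f).inv ≫ (rc.ev f (𝟙 x) ▷ f) ≫ (λ_ f).hom :=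
  rc.whiskerLeft_curry_ev f _

theorem whiskerLeft_tensorUnit_map_ev :
    (rc.hom f (𝟙 x) ◁ (rc.tensorUnit f ≫ (rc.homFunctor f).map (𝟙 x) f)) ≫
      rc.ev (rc.hom f (𝟙 x)) (rc.hom f f) = rc.comparison f := by
  change (_ ◁ (_ ≫ rc.curry (rc.hom f (𝟙 x)) (rc.ecomp f (𝟙 x) f))) ≫ _ = _
  rw [Bicategory.whiskerLeft_comp, Category.assoc, whiskerLeft_curry_ev]
  apply rc.hom_ext f
  have : (rc.hom f (𝟙 x) ◁ rc.tensorUnit f) ≫ rc.ecomp f (𝟙 x) f =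
      (rc.coslice x).paste (X := f) (Y := 𝟙 x) (Z := f) (𝟙 (rc.hom f (𝟙 x))) (rc.tensorUnit f) := by
    simp [WCat.paste]
  rw [this, whiskerLeft_paste_ev, whiskerLeft_comparison_ev, tensorUnit, whiskerLeft_curry_ev]
  simp

theorem isIso_comparison_of_preservesWTensor
    (h : PreservesWTensor (rc.homFunctor f) (𝟙 x) f f (rc.tensorUnit f)) :
    IsIso (rc.comparison f) := by
  rw [← rc.whiskerLeft_tensorUnit_map_ev]
  exact (rc.isWTensor_coslice_iff _).mp h

theorem whiskerLeft_leftZigzag_ev (η : 𝟙 y ⟶ rc.hom f (𝟙 x) ≫ f)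
    (H : rightZigzag η (rc.ev f (𝟙 x)) = (ρ_ f).hom ≫ (λ_ f).inv) :
    (f ◁ ((λ_ _).inv ≫ leftZigzag η (rc.ev f (𝟙 x)) ≫ (ρ_ _).hom)) ≫ rc.ev f (𝟙 x) =
      (f ◁ 𝟙 _) ≫ rc.ev f (𝟙 x) := by
  calc (f ◁ ((λ_ _).inv ≫ leftZigzag η (rc.ev f (𝟙 x)) ≫ (ρ_ _).hom)) ≫ rc.ev f (𝟙 x)
      = 𝟙 _ ⊗≫ (f ◁ η ▷ rc.hom f (𝟙 x)) ⊗≫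
          (((f ≫ rc.hom f (𝟙 x)) ◁ rc.ev f (𝟙 x)) ≫ (rc.ev f (𝟙 x) ▷ 𝟙 x)) ⊗≫ 𝟙 _ := by
        rw [leftZigzag]; bicategory
    _ = 𝟙 _ ⊗≫ (rightZigzag η (rc.ev f (𝟙 x)) ▷ rc.hom f (𝟙 x)) ⊗≫
          (𝟙 x ◁ rc.ev f (𝟙 x)) ⊗≫ 𝟙 _ := by
        rw [whisker_exchange, rightZigzag]; bicategory
    _ = _ := by rw [H]; bicategory

def adjunctionOfRightZigzag (η : 𝟙 y ⟶ rc.hom f (𝟙 x) ≫ f)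
    (H : rightZigzag η (rc.ev f (𝟙 x)) = (ρ_ f).hom ≫ (λ_ f).inv) :
    Bicategory.Adjunction (rc.hom f (𝟙 x)) f where
  unit := η
  counit := rc.ev f (𝟙 x)
  left_triangle := by
    have h := rc.hom_ext f (rc.whiskerLeft_leftZigzag_ev f η H)
    rw [Iso.inv_comp_eq, ← Iso.eq_comp_inv, Category.comp_id] at h
    exact h
  right_triangle := H

theorem rightZigzag_eid_inv_comparison [IsIso (rc.comparison f)] :
    rightZigzag (rc.eid f ≫ inv (rc.comparison f)) (rc.ev f (𝟙 x)) =
      (ρ_ f).hom ≫ (λ_ f).inv := by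
  calc rightZigzag (rc.eid f ≫ inv (rc.comparison f)) (rc.ev f (𝟙 x))
      = (f ◁ rc.eid f) ≫ (f ◁ inv (rc.comparison f)) ≫
          ((α_ f (rc.hom f (𝟙 x)) f).inv ≫ (rc.ev f (𝟙 x) ▷ f) ≫ (λ_ f).hom) ≫
            (λ_ f).inv := by
        rw [rightZigzag]; bicategory
    _ = ((f ◁ rc.eid f) ≫ rc.ev f f) ≫ (λ_ f).inv := by
        rw [← whiskerLeft_comparison_ev]
        simp only [← Bicategory.whiskerLeft_comp_assoc, Category.assoc, IsIso.inv_hom_id,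
          Category.comp_id]
    _ = (ρ_ f).hom ≫ (λ_ f).inv := by rw [whiskerLeft_eid_ev]

theorem nonempty_adjunction_of_preservesWTensor
    (h : PreservesWTensor (rc.homFunctor f) (𝟙 x) f f (rc.tensorUnit f)) :
    Nonempty (Bicategory.Adjunction (rc.hom f (𝟙 x)) f) :=
  have := rc.isIso_comparison_of_preservesWTensor f h
  ⟨rc.adjunctionOfRightZigzag f _ (rc.rightZigzag_eid_inv_comparison f)⟩

end

end RightClosedStr

/-- **Statement 14**: in a right-closed bicategory, tensors by `f` are absolute iff `f`
admits a left adjoint; and in that case `[f, 𝟙 x]` is a left adjoint of `f`. -/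
theorem tensors_absolute_iff_leftAdjoint
    (rc : RightClosedStr W) {x y : W} (f : x ⟶ y) :
    ((∀ (C D : WCat.{v} W) (G : WFunctor C D) (X : C.Obj x) (Y : C.Obj y)
        (u : f ⟶ C.Hom X Y), IsWTensor C X f Y u → PreservesWTensor G X f Y u) ↔
      ∃ g : y ⟶ x, Nonempty (Bicategory.Adjunction g f)) ∧
    ((∀ (C D : WCat.{v} W) (G : WFunctor C D) (X : C.Obj x) (Y : C.Obj y)
        (u : f ⟶ C.Hom X Y), IsWTensor C X f Y u → PreservesWTensor G X f Y u) →
      Nonempty (Bicategory.Adjunction ((rc.ihom f x).obj (𝟙 x)) f)) := by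
  have adjunction_of_absolute := rc.nonempty_adjunction_of_preservesWTensor f
  refine ⟨⟨fun habs => ⟨_, adjunction_of_absolute (habs _ _ _ _ _ _ (rc.isWTensor_tensorUnit f))⟩,
    ?_⟩, fun habs => adjunction_of_absolute (habs _ _ _ _ _ _ (rc.isWTensor_tensorUnit f))⟩
  rintro ⟨g, ⟨adj⟩⟩ C D G X Y u hT
  exact preservesWTensor_of_adjunction G adj hT

end Paper
end
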